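/- arXiv:0806.2350 — 6 statements merged into one kernel-verified Lean document; each statement's English description precedes it below -/
import Mathlib

section
/- For a vector p = (p_1, ..., p_n) ∈ [0,1]^n define R^n_i(p) = sqrt(Σ_{j=1}^n p_j(1 - p_j)) · P(S^n = i), where S^n is a sum of independent Bernoullis with parameters p_1, ..., p_n. Then for every p ∈ [0,1]^n and every i, R^n_i(p) ≤ sup { R^n_i(q) : q ∈ [0,1]^n and the set {q_j : 0 < q_j < 1} has at most 2 elements }. In other words, the supremum of R^n_i over [0,1]^n is attained (in the limit) by parameter vectors whose entries take at most two distinct values in the open interval (0,1). -/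
/-!
Fix `σ²`. On the compact slice of the cube where `σ²` is fixed, take a maximiser of `P(Sⁿ = i)`,
and among all maximisers one maximising `∑ qⱼ³`. Suppose it had three distinct values `x, y, z`
in `(0, 1)`. As a function of these three coordinates `P(Sⁿ = i)` is affine in each and
symmetric, hence equal to `α + β e₁ + γ e₂ + B e₃` in the elementary symmetric polynomials. Both
`σ²` and `∑ qⱼ³ - 3 e₃` only depend on `e₁, e₂`, and keeping `e₁, e₂` fixed one can push `e₃`
slightly in either direction while staying in `(0, 1)³`. Pushing it in the direction of `B`
(or upwards if `B = 0`) contradicts the choice of the maximiser.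
-/
open Set Function Filter Topology

/-- `P(Sⁿ = i)` for a sum of independent Bernoullis with parameters `p`. -/
noncomputable def Pprob (n : ℕ) (i : ℕ) (p : Fin n → ℝ) : ℝ :=
  ∑ A ∈ Finset.univ.filter (fun A : Finset (Fin n) => A.card = i),
    (∏ j ∈ A, p j) * ∏ j ∈ Aᶜ, (1 - p j)

/-- `Rⁿᵢ(p) = σⁿ(p) · P(Sⁿ = i)`. -/
noncomputable def R (n : ℕ) (i : ℕ) (p : Fin n → ℝ) : ℝ :=
  Real.sqrt (∑ j, p j * (1 - p j)) * Pprob n i p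

theorem sum_comp_update {ι α M : Type*} [Fintype ι] [DecidableEq ι] [AddCommGroup M]
    (g : α → M) (q : ι → α) (u : ι) (x : α) :
    ∑ j, g (update q u x j) = ∑ j, g (q j) - g (q u) + g x := by
  have := Finset.sum_update_of_mem (Finset.mem_univ u) (g ∘ q) (g x)
  rw [← comp_update] at this
  simp only [comp_apply] at this
  rw [this, ← Finset.add_sum_erase _ _ (Finset.mem_univ u), Finset.sdiff_singleton_eq_erase]
  abel

theorem sum_comp_update₃ {ι α M : Type*} [Fintype ι] [DecidableEq ι] [AddCommGroup M]
    (g : α → M) (q : ι → α) {u v w : ι} (huv : u ≠ v) (huw : u ≠ w) (hvw : v ≠ w) (x y z : α) :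
    ∑ j, g (update (update (update q u x) v y) w z j) =
      ∑ j, g (q j) + (g x - g (q u)) + (g y - g (q v)) + (g z - g (q w)) := by
  simp only [sum_comp_update, update_of_ne huv.symm, update_of_ne huw.symm, update_of_ne hvw.symm]
  abel

theorem exists_three_of_two_lt_ncard {ι α : Type*} [Finite ι] {q : ι → α} {s : Set α}
    (h : 2 < (range q ∩ s).ncard) :
    ∃ u v w, q u ∈ s ∧ q v ∈ s ∧ q w ∈ s ∧ q u ≠ q v ∧ q u ≠ q w ∧ q v ≠ q w := by
  obtain ⟨_, ⟨⟨u, rfl⟩, hu⟩, _, ⟨⟨v, rfl⟩, hv⟩, _, ⟨⟨w, rfl⟩, hw⟩, huv, huw, hvw⟩ :=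
    (Set.two_lt_ncard ((finite_range q).inter_of_left s)).1 h
  exact ⟨u, v, w, hu, hv, hw, huv, huw, hvw⟩

theorem exists_eq_elementary_of_symmetric_of_affine (G : ℝ → ℝ → ℝ → ℝ)
    (haff : ∀ x y z, G x y z = (1 - z) * G x y 0 + z * G x y 1)
    (hswap₁ : ∀ x y z, G x y z = G y x z) (hswap₂ : ∀ x y z, G x y z = G x z y) :
    ∃ a b c d : ℝ, ∀ x y z,
      G x y z = a + b * (x + y + z) + c * (x * y + y * z + z * x) + d * (x * y * z) := by
  have hy (x y z : ℝ) : G x y z = (1 - y) * G x 0 z + y * G x 1 z := by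
    rw [hswap₂ x y z, haff x z y, hswap₂ x z 0, hswap₂ x z 1]
  have hx (x y z : ℝ) : G x y z = (1 - x) * G 0 y z + x * G 1 y z := by
    rw [hswap₁ x y z, hy y x z, hswap₁ y 0 z, hswap₁ y 1 z]
  refine ⟨G 0 0 0, G 1 0 0 - G 0 0 0, G 1 1 0 - 2 * G 1 0 0 + G 0 0 0,
    G 1 1 1 - 3 * G 1 1 0 + 3 * G 1 0 0 - G 0 0 0, fun x y z => ?_⟩
  linear_combination hx x y z + (1 - x) * hy 0 y z + x * hy 1 y z
    + (1 - x) * (1 - y) * haff 0 0 z + (1 - x) * y * haff 0 1 z + x * (1 - y) * haff 1 0 z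
    + x * y * haff 1 1 z
    + ((1 - x) * y * (1 - z) + (1 - x) * (1 - y) * z) * hswap₁ 0 1 0
    + (1 - x) * (1 - y) * z * hswap₂ 0 0 1 + (1 - x) * y * z * hswap₁ 0 1 1
    + (x * (1 - y) * z + (1 - x) * y * z) * hswap₂ 1 0 1

theorem exists_mul_pos_of_eventually {f : ℝ → ℝ} (hf : ContinuousAt f 0) (hf0 : f 0 ≠ 0)
    {P : ℝ → Prop} (hP : ∀ᶠ t in 𝓝 0, P t) : ∃ t, P t ∧ 0 < t * f t := by
  rcases hf0.lt_or_gt with hneg | hpos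
  · obtain ⟨t, ⟨hPt, hft⟩, ht⟩ := (((hP.and (hf.eventually_lt_const hneg)).filter_mono
      nhdsWithin_le_nhds).and (self_mem_nhdsWithin (s := Iio 0))).exists
    exact ⟨t, hPt, mul_pos_of_neg_of_neg ht hft⟩
  · obtain ⟨t, ⟨hPt, hft⟩, ht⟩ := (((hP.and (hf.eventually_const_lt hpos)).filter_mono
      nhdsWithin_le_nhds).and (self_mem_nhdsWithin (s := Ioi 0))).exists
    exact ⟨t, hPt, mul_pos ht hft⟩

theorem exists_same_e₁_e₂_with_larger_mul_e₃ {x y z : ℝ} (hx : x ∈ Ioo 0 1) (hy : y ∈ Ioo 0 1)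
    (hz : z ∈ Ioo 0 1) (hxy : x ≠ y) (hxz : x ≠ z) (hyz : y ≠ z) {d : ℝ} (hd : d ≠ 0) :
    ∃ x' y' z' : ℝ, x' ∈ Icc 0 1 ∧ y' ∈ Icc 0 1 ∧ z' ∈ Icc 0 1 ∧
      x' + y' + z' = x + y + z ∧ x' * y' + y' * z' + z' * x' = x * y + y * z + z * x ∧
      d * (x * y * z) < d * (x' * y' * z') := by
  -- Move `x` to `x + t`; the new `y, z` are the roots of
  -- `T² - (y + z - t) T + yz + t (x - y - z) + t²`, whose discriminant is `D t`,
  -- and then `e₃` changes by `t H(t)`.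
  let D (t : ℝ) := (y - z) ^ 2 + 2 * t * (y + z - 2 * x) - 3 * t ^ 2
  let H (t : ℝ) := (x - y) * (x - z) + t * (2 * x - y - z) + t ^ 2
  have hD0 : √(D 0) = |y - z| := by simp [D, Real.sqrt_sq_eq_abs]
  have hroots : ∀ᶠ t in 𝓝 0, x + t ∈ Ioo 0 1 ∧ (y + z - t + √(D t)) / 2 ∈ Ioo 0 1 ∧
      (y + z - t - √(D t)) / 2 ∈ Ioo 0 1 ∧ 0 < D t := by
    refine (((continuous_const_add x).continuousAt.eventually_mem (isOpen_Ioo.mem_nhds ?_)).and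
      (((by fun_prop : Continuous fun t => (y + z - t + √(D t)) / 2).continuousAt.eventually_mem
        (isOpen_Ioo.mem_nhds ?_)).and
      (((by fun_prop : Continuous fun t => (y + z - t - √(D t)) / 2).continuousAt.eventually_mem
        (isOpen_Ioo.mem_nhds ?_)).and
      ((by fun_prop : Continuous D).continuousAt.eventually_mem (isOpen_Ioi.mem_nhds ?_)))))
    · simpa using hx
    -- at `t = 0` the two roots are `(y + z ± |y - z|) / 2`, that is `y` and `z`
    iterate 2
      simp only [sub_zero, hD0]
      rcases abs_cases (y - z) with ⟨h, -⟩ | ⟨h, -⟩ <;> constructor <;>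
        linarith [hy.1, hy.2, hz.1, hz.2]
    · simpa [D] using sq_pos_iff.2 (sub_ne_zero.2 hyz)
  obtain ⟨t, ⟨hxt, hYt, hZt, hDt⟩, ht⟩ :=
    exists_mul_pos_of_eventually (f := fun t => d * H t) (by fun_prop)
      (by simp [H, hd, sub_eq_zero, hxy, hxz]) hroots
  have hsq := Real.sq_sqrt hDt.le
  refine ⟨x + t, _, _, Ioo_subset_Icc_self hxt, Ioo_subset_Icc_self hYt, Ioo_subset_Icc_self hZt,
    by ring, by linear_combination (-1 / 4) * hsq, ?_⟩
  have he₃ : d * ((x + t) * ((y + z - t + √(D t)) / 2) * ((y + z - t - √(D t)) / 2)) -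
      d * (x * y * z) = t * (d * H t) := by
    linear_combination (-d * (x + t) / 4) * hsq
  linarith

section Pprob

variable {n : ℕ} (i : ℕ)

@[fun_prop]
theorem continuous_Pprob : Continuous (Pprob n i) := by
  unfold Pprob
  fun_prop

theorem continuous_R : Continuous (R n i) := by
  unfold R
  fun_prop

theorem Pprob_comp_perm (q : Fin n → ℝ) (π : Equiv.Perm (Fin n)) :
    Pprob n i (q ∘ π) = Pprob n i q := by
  classical
  have map_compl (A : Finset (Fin n)) : (A.map π.toEmbedding)ᶜ = Aᶜ.map π.toEmbedding := by
    ext; simp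
  unfold Pprob
  refine Finset.sum_nbij' (·.map π.toEmbedding) (·.map π.symm.toEmbedding) ?_ ?_ ?_ ?_ ?_ <;>
    simp [Finset.map_map, map_compl, Finset.prod_map]

theorem Pprob_update_update_comm (r : Fin n → ℝ) {a b : Fin n} (hab : a ≠ b) (x y : ℝ) :
    Pprob n i (update (update r a x) b y) = Pprob n i (update (update r a y) b x) := by
  rw [← Pprob_comp_perm i _ (Equiv.swap a b)]
  congr 1
  ext j
  simp only [comp_apply, update_apply, Equiv.swap_apply_def]
  split_ifs <;> simp_all

theorem Pprob_update (q : Fin n → ℝ) (u : Fin n) (x : ℝ) :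
    Pprob n i (update q u x) =
      (1 - x) * Pprob n i (update q u 0) + x * Pprob n i (update q u 1) := by
  classical
  unfold Pprob
  rw [Finset.mul_sum, Finset.mul_sum, ← Finset.sum_add_distrib]
  refine Finset.sum_congr rfl fun A _ => ?_
  have hcompl (y : ℝ) : (fun j => 1 - update q u y j) = update (1 - q) u (1 - y) :=
    comp_update (fun t => 1 - t) q u y
  simp only [hcompl]
  by_cases hu : u ∈ A
  · have hu' : u ∉ Aᶜ := by simpa using hu
    simp only [Finset.prod_update_of_mem hu, Finset.prod_update_of_notMem hu']
    ring
  · have hu' : u ∈ Aᶜ := by simpa using hu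
    simp only [Finset.prod_update_of_mem hu', Finset.prod_update_of_notMem hu]
    ring

theorem exists_Pprob_update₃_eq (q : Fin n → ℝ) {u v w : Fin n} (huv : u ≠ v) (huw : u ≠ w)
    (hvw : v ≠ w) :
    ∃ a b c B : ℝ, ∀ x y z, Pprob n i (update (update (update q u x) v y) w z) =
      a + b * (x + y + z) + c * (x * y + y * z + z * x) + B * (x * y * z) := by
  refine exists_eq_elementary_of_symmetric_of_affine _ (fun x y z => Pprob_update i _ w z)
    (fun x y z => ?_) (fun x y z => Pprob_update_update_comm i _ hvw y z)
  simp only [update_comm hvw, update_comm huw]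
  exact Pprob_update_update_comm i _ huv x y

theorem exists_improvement_of_three_values {q : Fin n → ℝ} (hq : ∀ j, q j ∈ Icc 0 1)
    {u v w : Fin n} (hu : q u ∈ Ioo 0 1) (hv : q v ∈ Ioo 0 1) (hw : q w ∈ Ioo 0 1)
    (huv : q u ≠ q v) (huw : q u ≠ q w) (hvw : q v ≠ q w) :
    ∃ q' : Fin n → ℝ, (∀ j, q' j ∈ Icc 0 1) ∧ ∑ j, q' j * (1 - q' j) = ∑ j, q j * (1 - q j) ∧
      (Pprob n i q < Pprob n i q' ∨ Pprob n i q' = Pprob n i q ∧ ∑ j, q j ^ 3 < ∑ j, q' j ^ 3) := by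
  have huv' := ne_of_apply_ne q huv
  have huw' := ne_of_apply_ne q huw
  have hvw' := ne_of_apply_ne q hvw
  obtain ⟨_, b, c, B, hP⟩ := exists_Pprob_update₃_eq i q huv' huw' hvw'
  obtain ⟨x, y, z, hx, hy, hz, he₁, he₂, he₃⟩ := exists_same_e₁_e₂_with_larger_mul_e₃ hu hv hw
    huv huw hvw (d := if B = 0 then 1 else B) (by split_ifs <;> simp [*])
  refine ⟨update (update (update q u x) v y) w z, fun j => ?_, ?_, ?_⟩
  · simp only [update_apply]
    split_ifs
    exacts [hz, hy, hx, hq j]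
  · rw [sum_comp_update₃ (fun t => t * (1 - t)) q huv' huw' hvw']
    linear_combination (1 - x - y - z - q u - q v - q w) * he₁ + 2 * he₂
  have hPq := hP (q u) (q v) (q w)
  simp only [update_eq_self] at hPq
  have hΔP : Pprob n i (update (update (update q u x) v y) w z) - Pprob n i q =
      B * (x * y * z - q u * q v * q w) := by
    rw [hP, hPq]
    linear_combination b * he₁ + c * he₂
  -- Newton's identity `∑ t³ = e₁³ - 3 e₁ e₂ + 3 e₃`.
  have hΔcubes : ∑ j, update (update (update q u x) v y) w z j ^ 3 - ∑ j, q j ^ 3 =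
      3 * (x * y * z - q u * q v * q w) := by
    rw [sum_comp_update₃ (· ^ 3) q huv' huw' hvw']
    linear_combination ((x + y + z) ^ 2 + (x + y + z) * (q u + q v + q w) + (q u + q v + q w) ^ 2
      - 3 * (q u * q v + q v * q w + q w * q u)) * he₁ - 3 * (x + y + z) * he₂
  rcases eq_or_ne B 0 with hB | hB
  · rw [if_pos hB] at he₃
    exact Or.inr ⟨by linear_combination hΔP + (x * y * z - q u * q v * q w) * hB, by linarith⟩
  · rw [if_neg hB] at he₃
    exact Or.inl (by linarith)

theorem exists_ncard_le_two_Pprob_le {p : Fin n → ℝ} (hp : ∀ j, p j ∈ Icc 0 1) :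
    ∃ q : Fin n → ℝ, (∀ j, q j ∈ Icc 0 1) ∧ ∑ j, q j * (1 - q j) = ∑ j, p j * (1 - p j) ∧
      Pprob n i p ≤ Pprob n i q ∧ (range q ∩ Ioo 0 1).ncard ≤ 2 := by
  set K := univ.pi (fun _ => Icc (0 : ℝ) 1) ∩
    {q : Fin n → ℝ | ∑ j, q j * (1 - q j) = ∑ j, p j * (1 - p j)}
  have hK : IsCompact K :=
    (isCompact_univ_pi fun _ => isCompact_Icc).inter_right (isClosed_eq (by fun_prop) (by fun_prop))
  obtain ⟨q₁, hq₁, hmax₁⟩ :=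
    hK.exists_isMaxOn ⟨p, mem_univ_pi.2 hp, rfl⟩ (continuous_Pprob i).continuousOn
  set M := K ∩ {q | Pprob n i q = Pprob n i q₁}
  have hM : IsCompact M := hK.inter_right (isClosed_eq (continuous_Pprob i) continuous_const)
  obtain ⟨q, ⟨hqK, hPq⟩, hmax⟩ := hM.exists_isMaxOn ⟨q₁, hq₁, rfl⟩
    (by fun_prop : Continuous fun q : Fin n → ℝ => ∑ j, q j ^ 3).continuousOn
  refine ⟨q, mem_univ_pi.1 hqK.1, hqK.2, hPq ▸ hmax₁ ⟨mem_univ_pi.2 hp, rfl⟩, ?_⟩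
  by_contra! hcard
  obtain ⟨u, v, w, hu, hv, hw, huv, huw, hvw⟩ := exists_three_of_two_lt_ncard hcard
  obtain ⟨q', hq', hσ, hbetter⟩ :=
    exists_improvement_of_three_values i (mem_univ_pi.1 hqK.1) hu hv hw huv huw hvw
  have hq'K : q' ∈ K := ⟨mem_univ_pi.2 hq', hσ.trans hqK.2⟩
  rcases hbetter with hlt | ⟨heq, hlt⟩
  · exact (hmax₁ hq'K).not_gt (hPq ▸ hlt)
  · exact (hmax ⟨hq'K, heq.trans hPq⟩).not_gt hlt

end Pprob

theorem reduction_to_two_values (n : ℕ) (i : ℕ) (p : Fin n → ℝ)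
    (hp : ∀ j, p j ∈ Set.Icc (0 : ℝ) 1) :
    R n i p ≤ sSup {r : ℝ | ∃ q : Fin n → ℝ, (∀ j, q j ∈ Set.Icc (0 : ℝ) 1) ∧
      (Set.range q ∩ Set.Ioo 0 1).ncard ≤ 2 ∧ r = R n i q} := by
  obtain ⟨q, hq, hσ, hP, hcard⟩ := exists_ncard_le_two_Pprob_le i hp
  have hbdd : BddAbove {r : ℝ | ∃ q : Fin n → ℝ, (∀ j, q j ∈ Set.Icc (0 : ℝ) 1) ∧
      (Set.range q ∩ Set.Ioo 0 1).ncard ≤ 2 ∧ r = R n i q} := by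
    have hcube : IsCompact (univ.pi fun _ : Fin n => Icc (0 : ℝ) 1) :=
      isCompact_univ_pi fun _ => isCompact_Icc
    refine ((hcube.image (continuous_R i)).bddAbove).mono ?_
    rintro _ ⟨q, hq, -, rfl⟩
    exact ⟨q, mem_univ_pi.2 hq, rfl⟩
  calc R n i p ≤ R n i q := by
        rw [R, R, hσ]
        exact mul_le_mul_of_nonneg_left hP (Real.sqrt_nonneg _)
    _ ≤ _ := le_csSup hbdd ⟨q, hq, hcard, rfl⟩
end

section
/- For all natural numbers a, b, all integers i, and all λ, μ ∈ [0,1], one has sqrt(a·λ(1-λ) + b·μ(1-μ)) · Σ_{k=0}^i B^a_k(λ) · B^b_{i-k}(μ) ≤ 1/√e. -/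
/-!
For `i = m ≥ 0` the sum is the coefficient of `Xᵐ` in `P = (λX + 1 - λ)ᵃ (μX + 1 - μ)ᵇ`, i.e. the
Fourier coefficient `(2π)⁻¹ ∫_{-π}^{π} P(e^{iθ}) e^{-imθ} dθ`. Since
`|p e^{iθ} + 1 - p|² = 1 + 2p(1-p)(cos θ - 1) ≤ exp (2p(1-p)(cos θ - 1))`, the integrand is at most
`exp (V (cos θ - 1))` in absolute value, where `V = aλ(1-λ) + bμ(1-μ)`. For `|θ| ≤ 2π/3`, concavity
of `sin` gives `1 - cos θ ≥ 27θ²/(8π²)`, so this part of the integral is at most a Gaussian integral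
`√(8π³/(27V))`; on the rest `1 - cos θ ≥ 3/2`, and `√V e^{-3V/2} ≤ 1/√(3e)`. Altogether `√V` times
the sum is at most `√(2π/27) + 1/(3√(3e)) ≈ 0.599`, which is below `1/√e ≈ 0.607`.
-/

/-- Binomial probabilities `Bⁿₖ(p) = C(n,k) pᵏ (1-p)ⁿ⁻ᵏ`, defined to be `0` for
`k < 0` or `k > n`. -/
noncomputable def B (n : ℕ) (k : ℤ) (p : ℝ) : ℝ :=
  if 0 ≤ k ∧ k ≤ (n : ℤ) then
    (n.choose k.toNat : ℝ) * p ^ k.toNat * (1 - p) ^ (n - k.toNat) else 0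

open Real MeasureTheory intervalIntegral Polynomial Finset
open Complex (I)
open scoped Complex

theorem mul_sin_le_sin_mul {x y : ℝ} (hx₀ : 0 ≤ x) (hx₁ : x ≤ 1) (hy₀ : 0 ≤ y) (hy : y ≤ π) :
    x * sin y ≤ sin (x * y) := by
  simpa using strictConcaveOn_sin_Icc.concaveOn.2 ⟨le_rfl, pi_pos.le⟩ ⟨hy₀, hy⟩
    (sub_nonneg.2 hx₁) hx₀ (sub_add_cancel 1 x)

theorem mul_sq_le_one_sub_cos {θ : ℝ} (hθ : |θ| ≤ 2 * π / 3) :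
    27 / (8 * π ^ 2) * θ ^ 2 ≤ 1 - cos θ := by
  have hπ := pi_pos
  have hchord : 3 * |θ| / (2 * π) * (√3 / 2) ≤ sin (|θ| / 2) := by
    have := mul_sin_le_sin_mul (x := 3 * |θ| / (2 * π)) (y := π / 3) (by positivity)
      (by rw [div_le_one (by positivity)]; linarith) (by positivity) (by linarith)
    rwa [sin_pi_div_three, show 3 * |θ| / (2 * π) * (π / 3) = |θ| / 2 by field_simp] at this
  have hcos : cos θ = 1 - 2 * sin (|θ| / 2) ^ 2 := by
    rw [← cos_two_mul_eq_one_sub, mul_div_cancel₀ _ two_ne_zero, cos_abs]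
  calc 27 / (8 * π ^ 2) * θ ^ 2 = 2 * (3 * |θ| / (2 * π) * (√3 / 2)) ^ 2 := by
        field_simp; rw [sq_abs, sq_sqrt (by norm_num : (0 : ℝ) ≤ 3)]; ring
    _ ≤ 2 * sin (|θ| / 2) ^ 2 := by gcongr
    _ = 1 - cos θ := by rw [hcos]; ring

theorem three_halves_le_one_sub_cos {θ : ℝ} (h₁ : 2 * π / 3 ≤ |θ|) (h₂ : |θ| ≤ π) :
    3 / 2 ≤ 1 - cos θ := by
  have hπ := pi_pos
  have : cos |θ| ≤ cos (2 * π / 3) :=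
    strictAntiOn_cos.antitoneOn ⟨by positivity, by linarith⟩ ⟨abs_nonneg θ, h₂⟩ h₁
  rw [cos_abs, show 2 * π / 3 = π - π / 3 by ring, cos_pi_sub, cos_pi_div_three] at this
  linarith

theorem integral_exp_mul_cos_sub_one_le {V : ℝ} (hV : 0 < V) :
    ∫ θ in -π..π, exp (V * (cos θ - 1)) ≤
      √(8 * π ^ 3 / (27 * V)) + 2 * π / 3 * exp (-(3 / 2 * V)) := by
  have hπ := pi_pos
  have hint (a b : ℝ) : IntervalIntegrable (fun θ ↦ exp (V * (cos θ - 1))) volume a b :=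
    (by fun_prop : Continuous _).intervalIntegrable a b
  have htail {a b : ℝ} (hab : a ≤ b) (h : ∀ θ ∈ Set.Icc a b, 2 * π / 3 ≤ |θ| ∧ |θ| ≤ π) :
      ∫ θ in a..b, exp (V * (cos θ - 1)) ≤ (b - a) * exp (-(3 / 2 * V)) := by
    simpa using integral_mono_on hab (hint a b) intervalIntegrable_const fun θ hθ ↦
      exp_le_exp.2 (by nlinarith [three_halves_le_one_sub_cos (h θ hθ).1 (h θ hθ).2])
  have hmid : ∫ θ in -(2 * π / 3)..2 * π / 3, exp (V * (cos θ - 1)) ≤ √(8 * π ^ 3 / (27 * V)) :=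
    calc ∫ θ in -(2 * π / 3)..2 * π / 3, exp (V * (cos θ - 1))
        ≤ ∫ θ in -(2 * π / 3)..2 * π / 3, exp (-(27 / (8 * π ^ 2) * V) * θ ^ 2) := by
          refine integral_mono_on (by linarith) (hint _ _)
            ((continuous_exp.comp (by fun_prop)).intervalIntegrable _ _) fun θ hθ ↦ exp_le_exp.2 ?_
          nlinarith [mul_sq_le_one_sub_cos (abs_le.2 hθ)]
      _ ≤ ∫ θ, exp (-(27 / (8 * π ^ 2) * V) * θ ^ 2) := by
          rw [integral_of_le (by linarith)]
          exact setIntegral_le_integral (integrable_exp_neg_mul_sq (by positivity))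
            (.of_forall fun _ ↦ (exp_pos _).le)
      _ = √(8 * π ^ 3 / (27 * V)) := by
          rw [integral_gaussian]; congr 1; field_simp
  rw [← integral_add_adjacent_intervals (hint (-π) (-(2 * π / 3))) (hint _ π),
    ← integral_add_adjacent_intervals (hint (-(2 * π / 3)) (2 * π / 3)) (hint _ π)]
  have hleft := htail (a := -π) (b := -(2 * π / 3)) (by linarith) fun θ hθ ↦ by
    rw [abs_of_neg (by linarith [hθ.2])]; constructor <;> linarith [hθ.1, hθ.2]
  have hright := htail (a := 2 * π / 3) (b := π) (by linarith) fun θ hθ ↦ by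
    rw [abs_of_pos (by linarith [hθ.1])]; constructor <;> linarith [hθ.1, hθ.2]
  nlinarith [exp_pos (-(3 / 2 * V))]

theorem sqrt_mul_exp_neg_mul_le {κ : ℝ} (hκ : 0 < κ) (V : ℝ) :
    √V * exp (-(κ * V)) ≤ 1 / √(2 * κ * exp 1) := by
  have hpeak : V * exp (-(2 * κ * V)) ≤ 1 / (2 * κ * exp 1) := by
    have := add_one_le_exp (2 * κ * V - 1)
    rw [sub_add_cancel, exp_sub, le_div_iff₀ (exp_pos 1)] at this
    rw [exp_neg, ← div_eq_mul_inv, div_le_div_iff₀ (exp_pos _) (by positivity)]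
    linarith
  calc √V * exp (-(κ * V)) = √(V * exp (-(2 * κ * V))) := by
        rw [sqrt_mul' _ (exp_pos _).le, ← exp_half]; ring_nf
    _ ≤ 1 / √(2 * κ * exp 1) := by
        rw [one_div, ← sqrt_inv, ← one_div]; exact sqrt_le_sqrt hpeak

theorem sqrt_mul_integral_exp_mul_cos_sub_one_le (V : ℝ) :
    √V * ∫ θ in -π..π, exp (V * (cos θ - 1)) ≤ 2 * π / √(exp 1) := by
  have hπ := pi_pos
  rcases le_or_gt V 0 with hV | hV
  · rw [sqrt_eq_zero'.2 hV, zero_mul]; positivity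
  have hgauss : √V * √(8 * π ^ 3 / (27 * V)) ≤ 2 * π * 0.4825 := by
    rw [← sqrt_mul hV.le, show V * (8 * π ^ 3 / (27 * V)) = 8 * π ^ 3 / 27 by field_simp,
      sqrt_le_left (by positivity)]
    nlinarith [pi_lt_d4, mul_pos hπ hπ]
  have htail : 2 * π / 3 * (√V * exp (-(3 / 2 * V))) ≤ 2 * π * 0.117 := by
    have hpeak := sqrt_mul_exp_neg_mul_le (κ := 3 / 2) (by norm_num) V
    have : 2.85 ≤ √(2 * (3 / 2) * exp 1) :=
      (le_sqrt (by norm_num) (by positivity)).2 (by nlinarith [exp_one_gt_d9])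
    have : 1 / √(2 * (3 / 2) * exp 1) ≤ 0.351 :=
      (one_div_le_one_div_of_le (by norm_num) this).trans (by norm_num)
    nlinarith
  have he : √(exp 1) ≤ 5 / 3 := (sqrt_le_left (by norm_num)).2 (by nlinarith [exp_one_lt_d9])
  calc √V * ∫ θ in -π..π, exp (V * (cos θ - 1))
      ≤ √V * (√(8 * π ^ 3 / (27 * V)) + 2 * π / 3 * exp (-(3 / 2 * V))) :=
        mul_le_mul_of_nonneg_left (integral_exp_mul_cos_sub_one_le hV) (sqrt_nonneg V)
    _ ≤ 2 * π * 0.6 := by linarith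
    _ ≤ 2 * π / √(exp 1) := by
        rw [le_div_iff₀ (sqrt_pos.2 (exp_pos 1))]; nlinarith

theorem integral_exp_int_mul_mul_I (n : ℤ) :
    ∫ θ in -π..π, cexp (n * θ * I) = if n = 0 then (2 * π : ℂ) else 0 := by
  split_ifs with hn
  · simp [hn]; ring
  have hc : (n : ℂ) * I ≠ 0 := mul_ne_zero (by exact_mod_cast hn) Complex.I_ne_zero
  have hperiod : cexp (n * I * π) = cexp (n * I * ↑(-π)) := by
    rw [show (n : ℂ) * I * π = n * I * ↑(-π) + n * (2 * π * I) by push_cast; ring,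
      Complex.exp_add, Complex.exp_int_mul_two_pi_mul_I, mul_one]
  simp_rw [mul_right_comm _ _ I]
  rw [integral_exp_mul_complex hc, hperiod, sub_self, zero_div]

theorem integral_eval_exp_mul_I_mul (P : ℂ[X]) (m : ℕ) :
    ∫ θ in -π..π, P.eval (cexp (θ * I)) * cexp (-(m * θ * I)) = 2 * π * P.coeff m := by
  have hN : P.natDegree < max P.natDegree m + 1 := by omega
  have hterm (k : ℕ) (θ : ℝ) : P.coeff k * cexp (θ * I) ^ k * cexp (-(m * θ * I)) =
      P.coeff k * cexp (((k - m : ℤ) : ℂ) * θ * I) := by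
    rw [← Complex.exp_nat_mul, mul_assoc, ← Complex.exp_add]; push_cast; ring_nf
  simp_rw [eval_eq_sum_range' hN, sum_mul, hterm]
  rw [integral_finsetSum fun k _ ↦ (by fun_prop : Continuous _).intervalIntegrable _ _]
  simp_rw [intervalIntegral.integral_const_mul, integral_exp_int_mul_mul_I, sub_eq_zero,
    Nat.cast_inj, mul_ite, mul_zero]
  rw [sum_ite_eq', if_pos (mem_range.2 (by omega))]; ring

theorem two_pi_mul_abs_coeff_le_integral (P : ℝ[X]) (m : ℕ) {g : ℝ → ℝ}
    (hg : IntervalIntegrable g volume (-π) π) (hPg : ∀ θ : ℝ, ‖aeval (cexp (θ * I)) P‖ ≤ g θ) :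
    2 * π * |P.coeff m| ≤ ∫ θ in -π..π, g θ := by
  have h := integral_eval_exp_mul_I_mul (P.map (algebraMap ℝ ℂ)) m
  simp_rw [eval_map_algebraMap, coeff_map, Complex.coe_algebraMap] at h
  calc 2 * π * |P.coeff m| = ‖2 * π * (P.coeff m : ℂ)‖ := by simp [abs_of_pos pi_pos]
    _ ≤ ∫ θ in -π..π, g θ := by
        rw [← h]
        refine norm_integral_le_of_norm_le (by linarith [pi_pos]) (ae_of_all _ fun θ _ ↦ ?_) hg
        have : ‖cexp (-(m * θ * I))‖ = 1 := by
          rw [show -(m * θ * I) = ((-(m * θ) : ℝ) : ℂ) * I by push_cast; ring]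
          exact Complex.norm_exp_ofReal_mul_I _
        rw [norm_mul, this, mul_one]
        exact hPg θ

theorem Polynomial.coeff_C_mul_X_add_C_pow {R : Type*} [CommSemiring R] (p q : R) (n k : ℕ) :
    ((C p * X + C q) ^ n).coeff k = n.choose k * p ^ k * q ^ (n - k) := by
  have hterm (j : ℕ) : (C p * X) ^ j * C q ^ (n - j) * (n.choose j : R[X]) =
      C (n.choose j * p ^ j * q ^ (n - j)) * X ^ j := by
    simp only [mul_pow, ← C_pow, C_mul, C_eq_natCast]; ring
  simp_rw [add_pow, finsetSum_coeff, hterm, coeff_C_mul_X_pow]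
  rw [sum_ite_eq]
  split_ifs with hk
  · rfl
  · rw [Nat.choose_eq_zero_of_lt (by simpa [Nat.lt_succ_iff] using hk)]; simp

noncomputable def binomialPGF (n : ℕ) (p : ℝ) : ℝ[X] := (C p * X + C (1 - p)) ^ n

theorem B_natCast (n k : ℕ) (p : ℝ) : B n k p = (binomialPGF n p).coeff k := by
  rw [B, binomialPGF, coeff_C_mul_X_add_C_pow]
  split_ifs with hk
  · simp
  · rw [Nat.choose_eq_zero_of_lt (by omega)]; simp

theorem sum_B_mul_B_eq_coeff_mul (a b m : ℕ) (lam mu : ℝ) :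
    ∑ k ∈ Icc (0 : ℤ) m, B a k lam * B b (m - k) mu =
      (binomialPGF a lam * binomialPGF b mu).coeff m := by
  rw [coeff_mul, Nat.sum_antidiagonal_eq_sum_range_succ
    (fun k l ↦ (binomialPGF a lam).coeff k * (binomialPGF b mu).coeff l), Int.Icc_eq_finset_map,
    sum_map]
  refine sum_congr (by simp) fun k hk ↦ ?_
  rw [← B_natCast, ← B_natCast, Nat.cast_sub (by simpa [Nat.lt_succ_iff] using hk)]
  simp

theorem norm_mul_exp_mul_I_add_one_sub_le (p θ : ℝ) :
    ‖p * cexp (θ * I) + (1 - p)‖ ≤ exp (p * (1 - p) * (cos θ - 1)) := by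
  have hsq : ‖p * cexp (θ * I) + (1 - p)‖ ^ 2 = 1 + 2 * (p * (1 - p)) * (cos θ - 1) := by
    rw [Complex.sq_norm, Complex.normSq_apply]
    simp only [Complex.add_re, Complex.add_im, Complex.mul_re, Complex.mul_im, Complex.ofReal_re,
      Complex.ofReal_im, Complex.exp_ofReal_mul_I_re, Complex.exp_ofReal_mul_I_im,
      Complex.sub_re, Complex.sub_im, Complex.one_re, Complex.one_im]
    linear_combination p ^ 2 * sin_sq_add_cos_sq θ
  have hexp : 1 + 2 * (p * (1 - p)) * (cos θ - 1) ≤ exp (p * (1 - p) * (cos θ - 1)) ^ 2 := by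
    rw [← exp_nat_mul]; push_cast
    linarith [add_one_le_exp (2 * (p * (1 - p) * (cos θ - 1)))]
  exact (pow_le_pow_iff_left₀ (norm_nonneg _) (exp_pos _).le two_ne_zero).1 (hsq ▸ hexp)

theorem norm_aeval_exp_mul_I_binomialPGF_le (n : ℕ) (p θ : ℝ) :
    ‖aeval (cexp (θ * I)) (binomialPGF n p)‖ ≤ exp (n * (p * (1 - p)) * (cos θ - 1)) := by
  rw [binomialPGF, map_pow, norm_pow, mul_assoc, exp_nat_mul]
  simp only [map_add, map_mul, aeval_C, aeval_X, Complex.coe_algebraMap, Complex.ofReal_sub,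
    Complex.ofReal_one]
  exact pow_le_pow_left₀ (norm_nonneg _) (norm_mul_exp_mul_I_add_one_sub_le p θ) n

theorem norm_aeval_exp_mul_I_binomialPGF_mul_le (a b : ℕ) (lam mu θ : ℝ) :
    ‖aeval (cexp (θ * I)) (binomialPGF a lam * binomialPGF b mu)‖ ≤
      exp ((a * lam * (1 - lam) + b * mu * (1 - mu)) * (cos θ - 1)) := by
  rw [map_mul, norm_mul]
  calc _ ≤ exp (a * (lam * (1 - lam)) * (cos θ - 1)) * exp (b * (mu * (1 - mu)) * (cos θ - 1)) :=
        mul_le_mul (norm_aeval_exp_mul_I_binomialPGF_le a lam θ)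
          (norm_aeval_exp_mul_I_binomialPGF_le b mu θ) (norm_nonneg _) (exp_pos _).le
    _ = _ := by rw [← exp_add]; ring_nf

theorem upper_bound_inv_sqrt_e_general (a b : ℕ) (i : ℤ) (lam mu : ℝ) :
    Real.sqrt (a * lam * (1 - lam) + b * mu * (1 - mu)) *
      ∑ k ∈ Finset.Icc (0 : ℤ) i, B a k lam * B b (i - k) mu
    ≤ 1 / Real.sqrt (Real.exp 1) := by
  rcases lt_or_ge i 0 with hi | hi
  · rw [Icc_eq_empty_of_lt hi, sum_empty, mul_zero]; positivity
  lift i to ℕ using hi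
  set V := a * lam * (1 - lam) + b * mu * (1 - mu)
  set P := binomialPGF a lam * binomialPGF b mu
  rw [sum_B_mul_B_eq_coeff_mul]
  have hcoeff : 2 * π * |P.coeff i| ≤ ∫ θ in -π..π, exp (V * (cos θ - 1)) :=
    two_pi_mul_abs_coeff_le_integral P i ((by fun_prop : Continuous _).intervalIntegrable _ _)
      (norm_aeval_exp_mul_I_binomialPGF_mul_le a b lam mu)
  have hπ := pi_pos
  calc √V * P.coeff i ≤ √V * ((∫ θ in -π..π, exp (V * (cos θ - 1))) / (2 * π)) := by
        gcongr
        rw [le_div_iff₀ (by positivity)]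
        nlinarith [le_abs_self (P.coeff i)]
    _ = (√V * ∫ θ in -π..π, exp (V * (cos θ - 1))) / (2 * π) := by ring
    _ ≤ 2 * π / √(exp 1) / (2 * π) := by gcongr; exact sqrt_mul_integral_exp_mul_cos_sub_one_le V
    _ = 1 / √(exp 1) := by field_simp

theorem upper_bound_inv_sqrt_e (a b : ℕ) (i : ℤ) (lam mu : ℝ)
    (hlam : lam ∈ Set.Icc (0 : ℝ) 1) (hmu : mu ∈ Set.Icc (0 : ℝ) 1) :
    Real.sqrt (a * lam * (1 - lam) + b * mu * (1 - mu)) *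
      ∑ k ∈ Finset.Icc (0 : ℤ) i, B a k lam * B b (i - k) mu
    ≤ 1 / Real.sqrt (Real.exp 1) :=
  upper_bound_inv_sqrt_e_general a b i lam mu
end

section
/- For every natural number a ≥ 1, every integer k with 0 ≤ k ≤ a, and every λ ∈ [0,1], one has sqrt(a·λ(1-λ)) · C(a,k) λ^k (1-λ)^{a-k} ≤ 1/√(2e). -/
/-!
Square both sides, write `j = a - k`, and use the symmetry `λ ↦ 1 - λ`, `k ↔ j` to assume
`j ≤ k`.
Weighted AM-GM bounds `λ^(2k+1) (1-λ)^(2j+1)` by its maximum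
`(2k+1)^(2k+1) (2j+1)^(2j+1) / (2a+2)^(2a+2)`, attained at `λ = (2k+1)/(2a+2)`.
Write `(n+1)^(n+1) = u n * n^(n+1)` where `u n = (1 + 1/n)^(n+1)` decreases to `e`, and
`n! = s n * √(2n) * (n/e)^n` where the Stirling sequence `s` decreases to `√π`.
For `j ≥ 1` the claim becomes `e * s(a)² / (s(k)² s(j)²) * u(2k) u(2j) / u(a)² ≤ 1`, which
follows from `s a ≤ s k`, `u (2k) ≤ u a` (as `a ≤ 2k`), `e ≤ u a` and `u (2j) ≤ s(j)²`; the last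
holds because `(5/4)^5 < π` for `j ≥ 2` and `27/4 < e²` for `j = 1`.
For `j = 0` only `e ≤ u (2a+1)` is needed.
-/

open Real Stirling Nat

noncomputable def upperEulerSeq (n : ℕ) : ℝ := (1 + 1 / (n : ℝ)) ^ (n + 1)

lemma add_one_pow_eq_upperEulerSeq_mul {n : ℕ} (hn : n ≠ 0) :
    ((n : ℝ) + 1) ^ (n + 1) = upperEulerSeq n * (n : ℝ) ^ (n + 1) := by
  have hn' : (0 : ℝ) < n := by positivity
  rw [upperEulerSeq, ← mul_pow]; congr 1; field_simp

lemma exp_one_le_upperEulerSeq {n : ℕ} (hn : n ≠ 0) : exp 1 ≤ upperEulerSeq n := by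
  have hn' : (0 : ℝ) < n := by positivity
  have hle : (n : ℝ) / (n + 1) ≤ exp (-(1 / (n + 1))) := by
    have := add_one_le_exp (-(1 / ((n : ℝ) + 1)))
    have heq : (n : ℝ) / (n + 1) = -(1 / (n + 1)) + 1 := by field_simp; ring
    linarith
  have hpow : ((n : ℝ) / (n + 1)) ^ (n + 1) ≤ (exp 1)⁻¹ := by
    calc ((n : ℝ) / (n + 1)) ^ (n + 1) ≤ exp (-(1 / (n + 1))) ^ (n + 1) := by gcongr
      _ = (exp 1)⁻¹ := by
        rw [← exp_nat_mul, ← exp_neg]; congr 1; push_cast; field_simp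
  have hinv : upperEulerSeq n = (((n : ℝ) / (n + 1)) ^ (n + 1))⁻¹ := by
    rw [upperEulerSeq, ← inv_pow, inv_div, add_div, div_self hn'.ne']
  rw [hinv, le_inv_comm₀ (exp_pos 1) (by positivity)]
  exact hpow

lemma upperEulerSeq_succ_le {n : ℕ} (hn : n ≠ 0) :
    upperEulerSeq (n + 1) ≤ upperEulerSeq n := by
  have hn' : (0 : ℝ) < n := by positivity
  set t : ℝ := 1 / (n * (n + 2))
  have hbernoulli : 1 + 1 / ((n : ℝ) + 1) ≤ (1 + t) ^ (n + 1) := by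
    refine le_trans ?_ (one_add_mul_le_pow (by linarith [show 0 ≤ t by positivity]) _)
    simp only [t]
    rw [add_le_add_iff_left, div_le_iff₀ (by positivity)]
    push_cast
    field_simp
    nlinarith
  have hfactor : (1 + 1 / ((n : ℝ) + 1)) * (1 + t) = 1 + 1 / n := by
    simp only [t]; field_simp; ring
  calc upperEulerSeq (n + 1)
      = (1 + 1 / ((n : ℝ) + 1)) ^ (n + 1) * (1 + 1 / ((n : ℝ) + 1)) := by
        rw [upperEulerSeq, pow_succ]; push_cast; ring
    _ ≤ (1 + 1 / ((n : ℝ) + 1)) ^ (n + 1) * (1 + t) ^ (n + 1) := by gcongr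
    _ = upperEulerSeq n := by rw [← mul_pow, hfactor, upperEulerSeq]

lemma upperEulerSeq_le_of_le {m n : ℕ} (hm : m ≠ 0) (hmn : m ≤ n) :
    upperEulerSeq n ≤ upperEulerSeq m := by
  induction n, hmn using Nat.le_induction with
  | base => rfl
  | succ n hmn ih => exact (upperEulerSeq_succ_le (by omega)).trans ih

lemma stirlingSeq_pos {n : ℕ} (hn : n ≠ 0) : 0 < stirlingSeq n := by
  obtain ⟨n, rfl⟩ := Nat.exists_eq_succ_of_ne_zero hn
  exact stirlingSeq'_pos n

lemma stirlingSeq_le_of_le {m n : ℕ} (hm : m ≠ 0) (hmn : m ≤ n) :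
    stirlingSeq n ≤ stirlingSeq m := by
  obtain ⟨m, rfl⟩ := Nat.exists_eq_succ_of_ne_zero hm
  obtain ⟨n, rfl⟩ := Nat.exists_eq_succ_of_ne_zero (by omega : n ≠ 0)
  exact stirlingSeq'_antitone (by omega)

lemma factorial_sq_mul_exp_pow {n : ℕ} (hn : n ≠ 0) :
    (n ! : ℝ) ^ 2 * exp 1 ^ (2 * n) = stirlingSeq n ^ 2 * (2 * n) * (n : ℝ) ^ (2 * n) := by
  have hn' : (0 : ℝ) < n := by positivity
  rw [stirlingSeq, div_pow, mul_pow, sq_sqrt (by positivity), ← pow_mul, div_pow]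
  field_simp
  ring

lemma choose_sq_mul_stirlingSeq_sq_eq {k j : ℕ} (hk : k ≠ 0) (hj : j ≠ 0) :
    ((k + j).choose k : ℝ) ^ 2 * stirlingSeq k ^ 2 * stirlingSeq j ^ 2
        * (2 * k * j * (k : ℝ) ^ (2 * k) * (j : ℝ) ^ (2 * j))
      = stirlingSeq (k + j) ^ 2 * ((k : ℝ) + j) ^ (2 * (k + j) + 1) := by
  have hfac : ((k + j).choose k : ℝ) * k ! * j ! = (k + j)! := by
    have h := Nat.choose_mul_factorial_mul_factorial (Nat.le_add_right k j)
    rw [Nat.add_sub_cancel_left] at h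
    exact_mod_cast h
  have hk' := factorial_sq_mul_exp_pow hk
  have hj' := factorial_sq_mul_exp_pow hj
  have ha' := factorial_sq_mul_exp_pow (n := k + j) (by omega)
  push_cast at ha'
  rw [← hfac] at ha'
  linear_combination (1 / 2 : ℝ) * ha' - (1 / 2 : ℝ) * ((k + j).choose k : ℝ) ^ 2
    * (stirlingSeq k ^ 2 * (2 * k) * (k : ℝ) ^ (2 * k) * hj'
      + (j ! : ℝ) ^ 2 * exp 1 ^ (2 * j) * hk')

lemma choose_sq_mul_stirlingSeq_sq_le {k j : ℕ} (hj : j ≠ 0) (hjk : j ≤ k) :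
    ((k + j).choose k : ℝ) ^ 2 * stirlingSeq j ^ 2
        * (2 * k * j * (k : ℝ) ^ (2 * k) * (j : ℝ) ^ (2 * j))
      ≤ ((k : ℝ) + j) ^ (2 * (k + j) + 1) := by
  have hk : k ≠ 0 := by omega
  have hsk := stirlingSeq_pos hk
  refine le_of_mul_le_mul_left ?_ (pow_pos hsk 2)
  calc stirlingSeq k ^ 2 * (((k + j).choose k : ℝ) ^ 2 * stirlingSeq j ^ 2
        * (2 * k * j * (k : ℝ) ^ (2 * k) * (j : ℝ) ^ (2 * j)))
      = stirlingSeq (k + j) ^ 2 * ((k : ℝ) + j) ^ (2 * (k + j) + 1) := by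
        rw [← choose_sq_mul_stirlingSeq_sq_eq hk hj]; ring
    _ ≤ stirlingSeq k ^ 2 * ((k : ℝ) + j) ^ (2 * (k + j) + 1) := by
        gcongr
        · exact (stirlingSeq_pos (by omega)).le
        · exact stirlingSeq_le_of_le hk (by omega)

lemma upperEulerSeq_two_mul_le_stirlingSeq_sq {j : ℕ} (hj : j ≠ 0) :
    upperEulerSeq (2 * j) ≤ stirlingSeq j ^ 2 := by
  obtain rfl | hj2 := eq_or_ne j 1
  · have h27 : upperEulerSeq (2 * 1) = 27 / 8 := by norm_num [upperEulerSeq]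
    rw [h27, stirlingSeq_one, div_pow, sq_sqrt zero_le_two]
    nlinarith [exp_one_gt_d9]
  · calc upperEulerSeq (2 * j) ≤ upperEulerSeq 4 :=
          upperEulerSeq_le_of_le (by norm_num) (by omega)
      _ ≤ π := by have := pi_gt_d2; norm_num [upperEulerSeq]; linarith
      _ = √π ^ 2 := (sq_sqrt pi_pos.le).symm
      _ ≤ stirlingSeq j ^ 2 := by gcongr; exact sqrt_pi_le_stirlingSeq hj

lemma pow_mul_one_sub_pow_mul_add_pow_le {m n : ℕ} (hm : m ≠ 0) (hn : n ≠ 0) {x : ℝ}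
    (h0 : 0 ≤ x) (h1 : x ≤ 1) :
    x ^ m * (1 - x) ^ n * ((m : ℝ) + n) ^ (m + n) ≤ (m : ℝ) ^ m * (n : ℝ) ^ n := by
  have hm' : (0 : ℝ) < m := by positivity
  have hn' : (0 : ℝ) < n := by positivity
  set s : ℝ := m + n with hs_def
  have hs : 0 < s := by positivity
  set p : ℝ := x * s / m
  set q : ℝ := (1 - x) * s / n
  have hp : 0 ≤ p := by positivity
  have hq : 0 ≤ q := div_nonneg (mul_nonneg (by linarith) hs.le) hn'.le
  have hamgm : p ^ (m / s) * q ^ (n / s) ≤ 1 := by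
    refine (geom_mean_le_arith_mean2_weighted (by positivity) (by positivity) hp hq
      (by rw [← add_div, ← hs_def, div_self hs.ne'])).trans_eq ?_
    simp only [p, q]
    field_simp
    ring
  have hpow : p ^ m * q ^ n ≤ 1 := by
    have := pow_le_one₀ (n := m + n) (by positivity) hamgm
    rwa [mul_pow, ← rpow_natCast, ← rpow_natCast (q ^ _), ← rpow_mul hp, ← rpow_mul hq,
      Nat.cast_add, ← hs_def, div_mul_cancel₀ _ hs.ne', div_mul_cancel₀ _ hs.ne',
      rpow_natCast, rpow_natCast] at this
  have hexpand :
      p ^ m * q ^ n * ((m : ℝ) ^ m * (n : ℝ) ^ n) = x ^ m * (1 - x) ^ n * s ^ (m + n) := by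
    simp only [p, q, div_pow, mul_pow, pow_add]
    field_simp
  rw [← hexpand]
  exact mul_le_of_le_one_left (by positivity) hpow

lemma two_mul_exp_one_mul_mul_odd_pow_le (k : ℕ) :
    2 * exp 1 * k * (2 * k + 1 : ℝ) ^ (2 * k + 1) ≤ (2 * k + 2 : ℝ) ^ (2 * k + 2) := by
  have hf := add_one_pow_eq_upperEulerSeq_mul (n := 2 * k + 1) (by omega)
  push_cast at hf
  calc 2 * exp 1 * k * (2 * k + 1 : ℝ) ^ (2 * k + 1)
      = exp 1 * (2 * k + 1 : ℝ) ^ (2 * k + 1) * (2 * k) := by ring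
    _ ≤ exp 1 * (2 * k + 1 : ℝ) ^ (2 * k + 1) * (2 * k + 1) := by gcongr; linarith
    _ = exp 1 * (2 * k + 1 : ℝ) ^ (2 * k + 1 + 1) := by rw [pow_succ _ (2 * k + 1)]; ring
    _ ≤ upperEulerSeq (2 * k + 1) * (2 * k + 1 : ℝ) ^ (2 * k + 1 + 1) := by
        gcongr
        exact exp_one_le_upperEulerSeq (by omega)
    _ = (2 * k + 2 : ℝ) ^ (2 * k + 2) := by rw [← hf]; ring

lemma choose_sq_mul_odd_pow_le_of_ne_zero {k j : ℕ} (hj : j ≠ 0) (hjk : j ≤ k) :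
    2 * exp 1 * ((k : ℝ) + j) * ((k + j).choose k : ℝ) ^ 2
        * ((2 * k + 1 : ℝ) ^ (2 * k + 1) * (2 * j + 1 : ℝ) ^ (2 * j + 1))
      ≤ (2 * ((k : ℝ) + j) + 2) ^ (2 * (k + j) + 2) := by
  have he := exp_one_le_upperEulerSeq (n := k + j) (by omega)
  have hf0 : 0 ≤ upperEulerSeq (k + j) := (exp_pos 1).le.trans he
  have hAk :
      (2 * k + 1 : ℝ) ^ (2 * k + 1) ≤ upperEulerSeq (k + j) * (2 * k : ℝ) ^ (2 * k + 1) := by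
    have h := add_one_pow_eq_upperEulerSeq_mul (n := 2 * k) (by omega)
    push_cast at h
    rw [h]
    gcongr
    exact upperEulerSeq_le_of_le (by omega) (by omega)
  have hAj : (2 * j + 1 : ℝ) ^ (2 * j + 1) ≤ stirlingSeq j ^ 2 * (2 * j : ℝ) ^ (2 * j + 1) := by
    have h := add_one_pow_eq_upperEulerSeq_mul (n := 2 * j) (by omega)
    push_cast at h
    rw [h]
    gcongr
    exact upperEulerSeq_two_mul_le_stirlingSeq_sq hj
  have hD : (2 * ((k : ℝ) + j) + 2) ^ (2 * (k + j) + 2) = upperEulerSeq (k + j) ^ 2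
      * 2 ^ (2 * (k + j) + 2) * ((k : ℝ) + j) ^ (2 * (k + j) + 2) := by
    have h := add_one_pow_eq_upperEulerSeq_mul (n := k + j) (by omega)
    push_cast at h
    rw [show (2 * ((k : ℝ) + j) + 2) = 2 * ((k : ℝ) + j + 1) by ring, mul_pow,
      show 2 * (k + j) + 2 = (k + j + 1) * 2 by ring, pow_mul ((k : ℝ) + j + 1), h]
    ring
  calc 2 * exp 1 * ((k : ℝ) + j) * ((k + j).choose k : ℝ) ^ 2
        * ((2 * k + 1 : ℝ) ^ (2 * k + 1) * (2 * j + 1 : ℝ) ^ (2 * j + 1))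
      ≤ 2 * exp 1 * ((k : ℝ) + j) * ((k + j).choose k : ℝ) ^ 2 * (upperEulerSeq (k + j)
          * (2 * k : ℝ) ^ (2 * k + 1) * (stirlingSeq j ^ 2 * (2 * j : ℝ) ^ (2 * j + 1))) := by
        gcongr
    _ = exp 1 * upperEulerSeq (k + j) * 2 ^ (2 * (k + j) + 2) * ((k : ℝ) + j)
          * (((k + j).choose k : ℝ) ^ 2 * stirlingSeq j ^ 2
            * (2 * k * j * (k : ℝ) ^ (2 * k) * (j : ℝ) ^ (2 * j))) := by
        ring
    _ ≤ exp 1 * upperEulerSeq (k + j) * 2 ^ (2 * (k + j) + 2) * ((k : ℝ) + j)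
          * ((k : ℝ) + j) ^ (2 * (k + j) + 1) := by
        gcongr
        exact choose_sq_mul_stirlingSeq_sq_le hj hjk
    _ ≤ upperEulerSeq (k + j) * upperEulerSeq (k + j) * 2 ^ (2 * (k + j) + 2) * ((k : ℝ) + j)
          * ((k : ℝ) + j) ^ (2 * (k + j) + 1) := by
        gcongr
    _ = (2 * ((k : ℝ) + j) + 2) ^ (2 * (k + j) + 2) := by rw [hD]; ring

lemma choose_sq_mul_odd_pow_le {k j : ℕ} (hjk : j ≤ k) :
    2 * exp 1 * ((k : ℝ) + j) * ((k + j).choose k : ℝ) ^ 2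
        * ((2 * k + 1 : ℝ) ^ (2 * k + 1) * (2 * j + 1 : ℝ) ^ (2 * j + 1))
      ≤ (2 * ((k : ℝ) + j) + 2) ^ (2 * (k + j) + 2) := by
  obtain rfl | hj := eq_or_ne j 0
  · simpa using two_mul_exp_one_mul_mul_odd_pow_le k
  · exact choose_sq_mul_odd_pow_le_of_ne_zero hj hjk

lemma binomial_sq_bound (k j : ℕ) {x : ℝ} (h0 : 0 ≤ x) (h1 : x ≤ 1) :
    ((k : ℝ) + j) * x * (1 - x) * (((k + j).choose k : ℝ) * x ^ k * (1 - x) ^ j) ^ 2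
      ≤ 1 / (2 * exp 1) := by
  wlog hjk : j ≤ k generalizing k j x
  · calc ((k : ℝ) + j) * x * (1 - x) * (((k + j).choose k : ℝ) * x ^ k * (1 - x) ^ j) ^ 2
        = ((j : ℝ) + k) * (1 - x) * (1 - (1 - x))
          * (((j + k).choose j : ℝ) * (1 - x) ^ j * (1 - (1 - x)) ^ k) ^ 2 := by
          rw [add_comm j k, ← Nat.choose_symm_add]; ring
      _ ≤ 1 / (2 * exp 1) := this j k (by linarith) (by linarith) (by omega)
  have hamgm := pow_mul_one_sub_pow_mul_add_pow_le (m := 2 * k + 1) (n := 2 * j + 1)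
    (by omega) (by omega) h0 h1
  rw [show 2 * k + 1 + (2 * j + 1) = 2 * (k + j) + 2 by ring] at hamgm
  push_cast at hamgm
  rw [show (2 * k + 1 + (2 * j + 1) : ℝ) = 2 * ((k : ℝ) + j) + 2 by ring] at hamgm
  have hD : 0 < (2 * ((k : ℝ) + j) + 2) ^ (2 * (k + j) + 2) := by positivity
  rw [le_div_iff₀ (by positivity), ← mul_le_mul_iff_left₀ hD, one_mul]
  calc ((k : ℝ) + j) * x * (1 - x) * (((k + j).choose k : ℝ) * x ^ k * (1 - x) ^ j) ^ 2
        * (2 * exp 1) * (2 * ((k : ℝ) + j) + 2) ^ (2 * (k + j) + 2)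
      = 2 * exp 1 * ((k : ℝ) + j) * ((k + j).choose k : ℝ) ^ 2 * (x ^ (2 * k + 1)
          * (1 - x) ^ (2 * j + 1) * (2 * ((k : ℝ) + j) + 2) ^ (2 * (k + j) + 2)) := by
        ring
    _ ≤ 2 * exp 1 * ((k : ℝ) + j) * ((k + j).choose k : ℝ) ^ 2
          * ((2 * k + 1 : ℝ) ^ (2 * k + 1) * (2 * j + 1 : ℝ) ^ (2 * j + 1)) := by
        gcongr
    _ ≤ (2 * ((k : ℝ) + j) + 2) ^ (2 * (k + j) + 2) := choose_sq_mul_odd_pow_le hjk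

theorem single_binomial_bound_general (a : ℕ) (k : ℕ) (hk : k ≤ a)
    (lam : ℝ) (hlam : lam ∈ Set.Icc (0 : ℝ) 1) :
    Real.sqrt (a * lam * (1 - lam)) *
      ((a.choose k : ℝ) * lam ^ k * (1 - lam) ^ (a - k))
    ≤ 1 / Real.sqrt (2 * Real.exp 1) := by
  obtain ⟨h0, h1⟩ := hlam
  obtain ⟨j, rfl⟩ := Nat.exists_eq_add_of_le hk
  have h1' : 0 ≤ 1 - lam := sub_nonneg.mpr h1
  rw [Nat.add_sub_cancel_left, ← sqrt_sq (by positivity : 0 ≤ ((k + j).choose k : ℝ) * lam ^ k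
    * (1 - lam) ^ j), ← sqrt_mul (by positivity), one_div, ← sqrt_inv, ← one_div]
  gcongr
  push_cast
  exact binomial_sq_bound k j h0 h1

theorem single_binomial_bound (a : ℕ) (ha : 1 ≤ a) (k : ℕ) (hk : k ≤ a)
    (lam : ℝ) (hlam : lam ∈ Set.Icc (0 : ℝ) 1) :
    Real.sqrt (a * lam * (1 - lam)) *
      ((a.choose k : ℝ) * lam ^ k * (1 - lam) ^ (a - k))
    ≤ 1 / Real.sqrt (2 * Real.exp 1) :=
  single_binomial_bound_general a k hk lam hlam
end

section
/- For every natural number a ≥ 1, defining C^a_k = C(a,k) · sqrt(2a) · (k + 1/2)^{k+1/2} · (a - k + 1/2)^{a-k+1/2} / (a+1)^{a+1} for 0 ≤ k ≤ a, the maximum of C^a_k over k ∈ {0, 1, ..., a} is attained at k = 0 and k = a; moreover C^a_0 = C^a_a = sqrt(a/(a + 1/2)) · (1 - 1/(2(a+1)))^{a+1} ≤ e^{-1/2}. -/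
/-!
Writing `u = k + 1/2` and `v = a - k + 1/2`, the ratio `Cᵃₖ₊₁ / Cᵃₖ` is
`(v - 1/2) / (u + 1/2) · (u+1)^(u+1) (v-1)^(v-1) / (u^u v^v)`. Its logarithm is
`H(u + 1/2) - H(v - 1/2)` for `H = mulLogIncrement`, `H(w) = φ(w + 1/2) - φ(w - 1/2) - log w` with
`φ(x) = x log x`, and `H` is increasing because `H'(w) = log (w + 1/2) - log (w - 1/2) - 1/w ≥ 0`
(the first term of the series of `2 artanh (1/(2w))`). So `Cᵃₖ` decreases while `2k < a`, and the
symmetry `k ↔ a - k` gives the other half. At the endpoints `√(a/(a+1/2)) ≤ 1` and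
`(1 - 1/(2n))^n ≤ e^{-1/2}`.
-/

/-- `Cᵃₖ = C(a,k) √(2a) (k+1/2)^{k+1/2} (a-k+1/2)^{a-k+1/2} / (a+1)^{a+1}`. -/
noncomputable def Cak (a k : ℕ) : ℝ :=
  (a.choose k : ℝ) * Real.sqrt (2 * a) *
    ((k : ℝ) + 1 / 2) ^ ((k : ℝ) + 1 / 2) *
    ((a : ℝ) - k + 1 / 2) ^ ((a : ℝ) - (k : ℝ) + 1 / 2) / ((a : ℝ) + 1) ^ (a + 1)

open Real Set

theorem two_mul_le_log_one_add_sub_log_one_sub {x : ℝ} (hx₀ : 0 ≤ x) (hx₁ : x < 1) :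
    2 * x ≤ log (1 + x) - log (1 - x) := by
  have hsum := hasSum_log_sub_log_of_abs_lt_one (abs_lt.2 ⟨by linarith, hx₁⟩)
  simpa using le_hasSum hsum 0 fun k _ ↦ by positivity

theorem inv_le_log_add_half_sub_log_sub_half {w : ℝ} (hw : 1 / 2 < w) :
    w⁻¹ ≤ log (w + 1 / 2) - log (w - 1 / 2) := by
  have hw₀ : 0 < w := by linarith
  have hx₁ : (2 * w)⁻¹ < 1 := inv_lt_one_of_one_lt₀ (by linarith)
  have e_add : w + 1 / 2 = w * (1 + (2 * w)⁻¹) := by field_simp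
  have e_sub : w - 1 / 2 = w * (1 - (2 * w)⁻¹) := by field_simp
  rw [e_add, e_sub, log_mul hw₀.ne' (by positivity), log_mul hw₀.ne' (by linarith)]
  convert two_mul_le_log_one_add_sub_log_one_sub (by positivity) hx₁ using 1
  · field_simp
  · ring

noncomputable def mulLogIncrement (w : ℝ) : ℝ :=
  (w + 1 / 2) * log (w + 1 / 2) - (w - 1 / 2) * log (w - 1 / 2) - log w

theorem hasDerivAt_mulLogIncrement {w : ℝ} (hw : 1 / 2 < w) :
    HasDerivAt mulLogIncrement (log (w + 1 / 2) - log (w - 1 / 2) - w⁻¹) w := by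
  have d_add := (hasDerivAt_mul_log (x := w + 1 / 2) (by linarith)).comp w
    ((hasDerivAt_id w).add_const (1 / 2))
  have d_sub := (hasDerivAt_mul_log (x := w - 1 / 2) (by linarith)).comp w
    ((hasDerivAt_id w).sub_const (1 / 2))
  exact ((d_add.sub d_sub).sub (hasDerivAt_log (by linarith))).congr_deriv (by ring)

theorem mulLogIncrement_monotoneOn : MonotoneOn mulLogIncrement (Ioi (1 / 2)) := by
  refine monotoneOn_of_hasDerivWithinAt_nonneg
    (f' := fun w ↦ log (w + 1 / 2) - log (w - 1 / 2) - w⁻¹) (convex_Ioi _) (fun w hw ↦ (hasDerivAt_mulLogIncrement hw).continuousAt.continuousWithinAt)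
    (fun w hw ↦ ?_) (fun w hw ↦ ?_) <;> rw [interior_Ioi] at hw
  · exact (hasDerivAt_mulLogIncrement hw).hasDerivWithinAt
  · exact sub_nonneg.2 (inv_le_log_add_half_sub_log_sub_half hw)

theorem rpow_self_transfer_le {u v : ℝ} (hu : 0 < u) (huv : u + 1 ≤ v) :
    (v - 1 / 2) / (u + 1 / 2) * (u + 1) ^ (u + 1) * (v - 1) ^ (v - 1) ≤ u ^ u * v ^ v := by
  have hv₁ : 0 < v - 1 := by linarith
  have hv₂ : 0 < v - 1 / 2 := by linarith
  have hv : 0 < v := by linarith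
  have key := mulLogIncrement_monotoneOn (a := u + 1 / 2) (b := v - 1 / 2)
    (mem_Ioi.2 (by linarith)) (mem_Ioi.2 (by linarith)) (by linarith)
  rw [← log_le_log_iff (by positivity) (by positivity), log_mul (by positivity) (by positivity),
    log_mul (by positivity) (by positivity), log_mul (by positivity) (by positivity),
    log_div hv₂.ne' (by positivity), log_rpow (by positivity), log_rpow hv₁, log_rpow hu,
    log_rpow hv]
  simp only [mulLogIncrement] at key
  ring_nf at key ⊢
  linarith

theorem cast_choose_succ_right {n k : ℕ} (hk : k ≤ n) :
    (n.choose (k + 1) : ℝ) = n.choose k * ((n - k) / (k + 1)) := by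
  rw [mul_div_assoc', eq_div_iff (by positivity), ← Nat.cast_sub hk]
  exact_mod_cast Nat.choose_succ_right_eq n k

theorem Cak_succ_le {a k : ℕ} (h : 2 * k + 1 ≤ a) : Cak a (k + 1) ≤ Cak a k := by
  have huv : (k : ℝ) + 1 / 2 + 1 ≤ a - k + 1 / 2 := by
    have : (2 * k + 1 : ℝ) ≤ a := by exact_mod_cast h
    linarith
  have key := mul_le_mul_of_nonneg_left (rpow_self_transfer_le (by positivity) huv)
    (by positivity : (0 : ℝ) ≤ a.choose k * √(2 * a))
  unfold Cak
  rw [cast_choose_succ_right (by omega), div_le_div_iff_of_pos_right (by positivity)]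
  convert key using 1
  · push_cast
    ring_nf
  · ring

theorem Cak_sub {a k : ℕ} (h : k ≤ a) : Cak a (a - k) = Cak a k := by
  unfold Cak
  rw [Nat.choose_symm h, Nat.cast_sub h, sub_sub_cancel]
  ring

theorem Cak_le_Cak_zero_of_two_mul_le {a k : ℕ} (h : 2 * k ≤ a) : Cak a k ≤ Cak a 0 := by
  induction k with
  | zero => exact le_rfl
  | succ k ih => exact (Cak_succ_le (by omega)).trans (ih (by omega))

theorem Cak_le_Cak_zero {a k : ℕ} (h : k ≤ a) : Cak a k ≤ Cak a 0 := by
  rcases le_total (2 * k) a with hk | hk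
  · exact Cak_le_Cak_zero_of_two_mul_le hk
  · rw [← Cak_sub h]
    exact Cak_le_Cak_zero_of_two_mul_le (by omega)

theorem Cak_zero (a : ℕ) :
    Cak a 0 = √((a : ℝ) / (a + 1 / 2)) * (1 - 1 / (2 * ((a : ℝ) + 1))) ^ (a + 1) := by
  have ha : (0 : ℝ) < a + 1 / 2 := by positivity
  have hpow : ((a : ℝ) + 1 / 2) ^ ((a : ℝ) + 1 / 2) = (a + 1 / 2) ^ (a + 1) / √(a + 1 / 2) := by
    rw [sqrt_eq_rpow, ← rpow_natCast, ← rpow_sub ha]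
    push_cast
    ring_nf
  have hsqrt : √(2 * (a : ℝ)) * √(1 / 2) = √a := by
    rw [← sqrt_mul (by positivity)]
    ring_nf
  have hbase : 1 - 1 / (2 * ((a : ℝ) + 1)) = (a + 1 / 2) / (a + 1) := by
    field_simp
    ring
  simp only [Cak, Nat.choose_zero_right, Nat.cast_zero, Nat.cast_one, zero_add, sub_zero]
  rw [← sqrt_eq_rpow, hpow, hbase, div_pow, sqrt_div' _ ha.le, ← hsqrt]
  ring

theorem sqrt_div_mul_one_sub_pow_le_exp (a : ℕ) :
    √((a : ℝ) / (a + 1 / 2)) * (1 - 1 / (2 * ((a : ℝ) + 1))) ^ (a + 1) ≤ exp (-(1 / 2)) := by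
  have hsqrt : √((a : ℝ) / (a + 1 / 2)) ≤ 1 :=
    sqrt_le_one.2 (div_le_one_of_le₀ (by linarith) (by positivity))
  have hbase : 0 ≤ 1 - 1 / (2 * ((a : ℝ) + 1)) :=
    sub_nonneg.2 (div_le_one_of_le₀ (by linarith) (by positivity))
  have hexp : (1 - 1 / (2 * ((a : ℝ) + 1))) ^ (a + 1) ≤ exp (-(1 / 2)) := by
    convert one_sub_div_pow_le_exp_neg (n := a + 1) (t := 1 / 2) (by push_cast; linarith) using 3
    push_cast
    field_simp
  exact (mul_le_of_le_one_left (pow_nonneg hbase _) hsqrt).trans hexp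

theorem Cak_max_at_endpoints_general (a : ℕ) :
    (∀ k ≤ a, Cak a k ≤ Cak a 0 ∧ Cak a k ≤ Cak a a) ∧
    Cak a 0 = Cak a a ∧
    Cak a 0 = Real.sqrt ((a : ℝ) / ((a : ℝ) + 1 / 2)) *
      (1 - 1 / (2 * ((a : ℝ) + 1))) ^ (a + 1) ∧
    Cak a 0 ≤ Real.exp (-(1 / 2)) := by
  have h_ends : Cak a 0 = Cak a a := by simpa using (Cak_sub (a := a) (k := 0) a.zero_le).symm
  refine ⟨fun k hk ↦ ⟨Cak_le_Cak_zero hk, h_ends ▸ Cak_le_Cak_zero hk⟩, h_ends, Cak_zero a, ?_⟩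
  rw [Cak_zero]
  exact sqrt_div_mul_one_sub_pow_le_exp a

theorem Cak_max_at_endpoints (a : ℕ) (ha : 1 ≤ a) :
    (∀ k ≤ a, Cak a k ≤ Cak a 0 ∧ Cak a k ≤ Cak a a) ∧
    Cak a 0 = Cak a a ∧
    Cak a 0 = Real.sqrt ((a : ℝ) / ((a : ℝ) + 1 / 2)) *
      (1 - 1 / (2 * ((a : ℝ) + 1))) ^ (a + 1) ∧
    Cak a 0 ≤ Real.exp (-(1 / 2)) :=
  Cak_max_at_endpoints_general a
end

section
/- Let U and V be independent Binomial(n, p) random variables. Then P(U = V) = Σ_{k=0}^n (C(n,k) p^k (1-p)^{n-k})^2 = (1/2π) · ∫_0^{2π} [p^2 + (1-p)^2 + 2p(1-p)·cos θ]^n dθ. -/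
open MeasureTheory ProbabilityTheory Real

set_option maxHeartbeats 1000000

lemma exp_orth (m : ℤ) : (∫ θ in (0:ℝ)..(2*π), Complex.exp (m * θ * Complex.I))
    = if m = 0 then (2*π : ℂ) else 0 := by
  rcases eq_or_ne m 0 with hm | hm
  · simp [hm]
  · have hc : (m : ℂ) * Complex.I ≠ 0 := by
      simp [Complex.I_ne_zero, hm]
    rw [if_neg hm]
    have hrw : ∀ θ : ℝ, (m : ℂ) * θ * Complex.I = ((m : ℂ) * Complex.I) * θ := by
      intro θ; ring
    simp_rw [hrw]
    rw [integral_exp_mul_complex hc]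
    have h1 : Complex.exp ((m : ℂ) * Complex.I * (2*π : ℝ)) = 1 := by
      rw [show ((m:ℂ)*Complex.I)*((2*π : ℝ):ℂ) = m*(2*π*Complex.I) by push_cast; ring]
      exact Complex.exp_int_mul_two_pi_mul_I m
    rw [h1]
    simp

lemma exp_orth' (k j : ℕ) :
    (∫ θ in (0:ℝ)..(2*π), Complex.exp ((((k:ℤ)-(j:ℤ)) : ℂ) * θ * Complex.I))
      = if j = k then (2*π : ℂ) else 0 := by
  have h := exp_orth ((k:ℤ)-(j:ℤ))
  have hcond : ((k:ℤ)-(j:ℤ) = 0) = (j = k) := by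
    simp only [eq_iff_iff]; omega
  simp only [hcond] at h
  rw [show ((((k:ℤ)-(j:ℤ)) : ℤ) : ℂ) = (((k:ℤ) : ℂ) - ((j:ℤ) : ℂ)) by push_cast; ring] at h
  exact h

lemma pointwise (n : ℕ) (p : ℝ) (θ : ℝ) :
    (((p^2+(1-p)^2+2*p*(1-p)*Real.cos θ)^n : ℝ) : ℂ)
      = ∑ k ∈ Finset.range (n+1), ∑ j ∈ Finset.range (n+1),
          (((n.choose k : ℝ)*p^k*(1-p)^(n-k) : ℝ) : ℂ) *
          (((n.choose j : ℝ)*p^j*(1-p)^(n-j) : ℝ) : ℂ) *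
          Complex.exp ((((k:ℤ)-(j:ℤ)) : ℂ) * θ * Complex.I) := by
  have hcos : Complex.cos (θ:ℂ)
      = (Complex.exp (θ*Complex.I) + Complex.exp (-θ*Complex.I)) / 2 := by
    rw [Complex.cos]
  have hee : Complex.exp (θ*Complex.I) * Complex.exp (-θ*Complex.I) = 1 := by
    rw [← Complex.exp_add]; ring_nf; exact Complex.exp_zero
  have base : ((p^2+(1-p)^2+2*p*(1-p)*Real.cos θ : ℝ) : ℂ)
      = ((p:ℂ)*Complex.exp (θ*Complex.I)+(1-p)) *
        ((p:ℂ)*Complex.exp (-θ*Complex.I)+(1-p)) := by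
    push_cast
    rw [hcos]
    linear_combination (-(p:ℂ)^2) * hee
  push_cast
  push_cast at base
  rw [base, mul_pow, add_pow, add_pow, Finset.sum_mul_sum]
  refine Finset.sum_congr rfl fun k hk => Finset.sum_congr rfl fun j hj => ?_
  rw [mul_pow, mul_pow, ← Complex.exp_nat_mul, ← Complex.exp_nat_mul]
  rw [show ((k:ℂ)-(j:ℂ)) * θ * Complex.I
      = (k:ℂ)*(θ*Complex.I) + (j:ℂ)*(-θ*Complex.I) by ring,
    Complex.exp_add]
  ring

lemma key_integral (n : ℕ) (p : ℝ) :
    (∫ θ in (0:ℝ)..(2*π), (p^2+(1-p)^2+2*p*(1-p)*Real.cos θ)^n)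
      = 2*π * ∑ k ∈ Finset.range (n+1), ((n.choose k : ℝ)*p^k*(1-p)^(n-k))^2 := by
  have cont : ∀ (a b : ℂ) (k j : ℕ),
      Continuous fun θ : ℝ => a * b * Complex.exp ((((k:ℤ)-(j:ℤ)):ℂ)*θ*Complex.I) :=
    fun a b k j => continuous_const.mul (Complex.continuous_exp.comp
      (((continuous_const.mul Complex.continuous_ofReal).mul continuous_const)))
  have hcomplex : ((∫ θ in (0:ℝ)..(2*π), (p^2+(1-p)^2+2*p*(1-p)*Real.cos θ)^n : ℝ) : ℂ)
      = ((2*π * ∑ k ∈ Finset.range (n+1), ((n.choose k : ℝ)*p^k*(1-p)^(n-k))^2 : ℝ) : ℂ) := by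
    rw [← intervalIntegral.integral_ofReal]
    calc (∫ θ in (0:ℝ)..(2*π),
            (((p^2+(1-p)^2+2*p*(1-p)*Real.cos θ)^n : ℝ) : ℂ))
        = ∫ θ in (0:ℝ)..(2*π), ∑ k ∈ Finset.range (n+1), ∑ j ∈ Finset.range (n+1),
            (((n.choose k : ℝ)*p^k*(1-p)^(n-k) : ℝ) : ℂ) * (((n.choose j : ℝ)*p^j*(1-p)^(n-j) : ℝ) : ℂ) *
            Complex.exp ((((k:ℤ)-(j:ℤ)) : ℂ) * θ * Complex.I) := by
          exact intervalIntegral.integral_congr (fun θ _ => pointwise n p θ)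
      _ = ∑ k ∈ Finset.range (n+1), ∑ j ∈ Finset.range (n+1),
            ∫ θ in (0:ℝ)..(2*π), (((n.choose k : ℝ)*p^k*(1-p)^(n-k) : ℝ) : ℂ) * (((n.choose j : ℝ)*p^j*(1-p)^(n-j) : ℝ) : ℂ) *
            Complex.exp ((((k:ℤ)-(j:ℤ)) : ℂ) * θ * Complex.I) := by
          rw [intervalIntegral.integral_finset_sum (fun k _ =>
            (continuous_finset_sum _ (fun j _ => cont _ _ k j)).intervalIntegrable _ _)]
          exact Finset.sum_congr rfl fun k _ =>
            intervalIntegral.integral_finset_sum (fun j _ =>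
              (cont _ _ k j).intervalIntegrable _ _)
      _ = ∑ k ∈ Finset.range (n+1), ∑ j ∈ Finset.range (n+1),
            (((n.choose k : ℝ)*p^k*(1-p)^(n-k) : ℝ) : ℂ) * (((n.choose j : ℝ)*p^j*(1-p)^(n-j) : ℝ) : ℂ) *
            (if j = k then (2*π : ℂ) else 0) := by
          refine Finset.sum_congr rfl fun k _ => Finset.sum_congr rfl fun j _ => ?_
          rw [intervalIntegral.integral_const_mul, exp_orth' k j]
      _ = ∑ k ∈ Finset.range (n+1), (((n.choose k : ℝ)*p^k*(1-p)^(n-k) : ℝ) : ℂ) * (((n.choose k : ℝ)*p^k*(1-p)^(n-k) : ℝ) : ℂ) * (2*π : ℂ) := by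
          refine Finset.sum_congr rfl fun k hk => ?_
          rw [Finset.sum_eq_single k]
          · simp
          · intro j _ hjk
            simp [hjk]
          · intro hkk; exact absurd hk hkk
      _ = ((2*π * ∑ k ∈ Finset.range (n+1), ((n.choose k : ℝ)*p^k*(1-p)^(n-k))^2 : ℝ) : ℂ) := by
          push_cast
          rw [Finset.mul_sum]
          exact Finset.sum_congr rfl fun k _ => by ring
  exact Complex.ofReal_injective hcomplex

theorem prob_eq_binomials (n : ℕ) (p : ℝ) (hp : p ∈ Set.Icc (0 : ℝ) 1)
    {Ω : Type*} [MeasurableSpace Ω] (μ : Measure Ω) [IsProbabilityMeasure μ]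
    (U V : Ω → ℕ) (hU : Measurable U) (hV : Measurable V)
    (hUV : IndepFun U V μ)
    (hUd : ∀ k : ℕ, μ {ω | U ω = k} =
      ENNReal.ofReal ((n.choose k : ℝ) * p ^ k * (1 - p) ^ (n - k)))
    (hVd : ∀ k : ℕ, μ {ω | V ω = k} =
      ENNReal.ofReal ((n.choose k : ℝ) * p ^ k * (1 - p) ^ (n - k))) :
    (μ {ω | U ω = V ω}).toReal =
      ∑ k ∈ Finset.range (n + 1), ((n.choose k : ℝ) * p ^ k * (1 - p) ^ (n - k)) ^ 2 ∧
    (μ {ω | U ω = V ω}).toReal =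
      (1 / (2 * π)) * ∫ θ in (0 : ℝ)..(2 * π),
        (p ^ 2 + (1 - p) ^ 2 + 2 * p * (1 - p) * Real.cos θ) ^ n := by
  have hnn : ∀ k : ℕ, 0 ≤ (n.choose k : ℝ) * p ^ k * (1 - p) ^ (n - k) := fun k => by
    have h1 : (0:ℝ) ≤ p := hp.1
    have h2 : (0:ℝ) ≤ 1 - p := by linarith [hp.2]
    positivity
  have part1 : (μ {ω | U ω = V ω}).toReal =
      ∑ k ∈ Finset.range (n + 1), ((n.choose k : ℝ) * p ^ k * (1 - p) ^ (n - k)) ^ 2 := by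
    have hset : {ω | U ω = V ω} = ⋃ k : ℕ, U ⁻¹' {k} ∩ V ⁻¹' {k} := by
      ext ω
      simp only [Set.mem_setOf_eq, Set.mem_iUnion, Set.mem_inter_iff, Set.mem_preimage,
        Set.mem_singleton_iff]
      exact ⟨fun h => ⟨U ω, rfl, h.symm⟩, fun ⟨k, h1, h2⟩ => h1.trans h2.symm⟩
    have hdisj : Pairwise (Function.onFun Disjoint fun k : ℕ => U ⁻¹' {k} ∩ V ⁻¹' {k}) := by
      intro a b hab
      refine Set.disjoint_left.mpr fun ω hωa hωb => hab ?_
      exact hωa.1.symm.trans hωb.1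
    have hmeas : ∀ k : ℕ, MeasurableSet (U ⁻¹' {k} ∩ V ⁻¹' {k}) := fun k =>
      (hU (measurableSet_singleton k)).inter (hV (measurableSet_singleton k))
    have hμ : μ {ω | U ω = V ω}
        = ∑' k : ℕ, μ (U ⁻¹' {k}) * μ (V ⁻¹' {k}) := by
      rw [hset, measure_iUnion hdisj hmeas]
      exact tsum_congr fun k => hUV.measure_inter_preimage_eq_mul _ _
        (measurableSet_singleton k) (measurableSet_singleton k)
    have hpre : ∀ (W : Ω → ℕ) (k : ℕ), W ⁻¹' {k} = {ω | W ω = k} := fun W k => rfl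
    have hterm : ∀ k : ℕ, μ (U ⁻¹' {k}) * μ (V ⁻¹' {k})
        = ENNReal.ofReal (((n.choose k : ℝ) * p ^ k * (1 - p) ^ (n - k)) ^ 2) := fun k => by
      rw [hpre U k, hpre V k, hUd k, hVd k, ← ENNReal.ofReal_mul (hnn k), sq]
    have hzero : ∀ k ∉ Finset.range (n+1),
        ENNReal.ofReal (((n.choose k : ℝ) * p ^ k * (1 - p) ^ (n - k)) ^ 2) = 0 := fun k hk => by
      rw [Nat.choose_eq_zero_of_lt (by simpa using Finset.mem_range.not.mp hk)]
      simp
    rw [hμ]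
    simp_rw [hterm]
    rw [tsum_eq_sum hzero, ← ENNReal.ofReal_sum_of_nonneg (fun k _ => sq_nonneg _),
      ENNReal.toReal_ofReal (Finset.sum_nonneg fun k _ => sq_nonneg _)]
  refine ⟨part1, ?_⟩
  rw [part1, key_integral n p]
  have hπ : (2 * π) ≠ 0 := by positivity
  field_simp
end

section
/- Let X ~ Poisson(x) be a Poisson random variable with mean x ≥ 0. Then for every natural number i, sqrt(x) · e^{-x} · x^i / i! ≤ 1/√(2e), i.e., σ_X · P(X = i) ≤ 1/√(2e). -/
/-!
For `x > 0`, `√x · e^{-x} x^i / i! = x^{i+1/2} e^{-x} / i!` is maximised at `x = i + 1/2`.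
The maximum `(i+1/2)^{i+1/2} e^{-(i+1/2)} / i!` is nonincreasing in `i`: the ratio of consecutive
values is at most `1` because `t ↦ (1+t) log(1+t) - (1-t) log(1-t)` has derivative
`2 + log(1 - t²) ≤ 2`. At `i = 0` it equals `(2e)^{-1/2}`.
-/

open Real Set
open scoped Nat

theorem one_add_mul_log_one_add_sub_one_sub_mul_log_one_sub_le {u : ℝ} (hu0 : 0 ≤ u)
    (hu1 : u < 1) : (1 + u) * log (1 + u) - (1 - u) * log (1 - u) ≤ 2 * u := by
  set h : ℝ → ℝ := fun t ↦ (1 + t) * log (1 + t) - (1 - t) * log (1 - t)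
  have hderiv : ∀ t ∈ Ioo (-1 : ℝ) 1, HasDerivAt h (2 + log ((1 + t) * (1 - t))) t := by
    rintro t ⟨ht₁, ht₂⟩
    have hplus := (hasDerivAt_mul_log (x := 1 + t) (by linarith)).comp t
      ((hasDerivAt_id t).const_add 1)
    have hminus := (hasDerivAt_mul_log (x := 1 - t) (by linarith)).comp t
      ((hasDerivAt_id t).const_sub 1)
    rw [log_mul (by linarith) (by linarith)]
    exact (hplus.sub hminus).congr_deriv (by ring)
  have hderiv_le : ∀ t ∈ interior (Ioo (-1 : ℝ) 1), deriv h t ≤ 2 := by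
    rw [interior_Ioo]
    rintro t ht
    rw [(hderiv t ht).deriv, add_le_iff_nonpos_right]
    exact log_nonpos (by nlinarith [ht.1, ht.2]) (by nlinarith [sq_nonneg t])
  have hmvt := (convex_Ioo (-1 : ℝ) 1).image_sub_le_mul_sub_of_deriv_le
    (fun t ht ↦ (hderiv t ht).continuousAt.continuousWithinAt)
    (fun t ht ↦ (hderiv t (interior_subset ht)).differentiableAt.differentiableWithinAt)
    hderiv_le 0 (by norm_num) u ⟨by linarith, hu1⟩ hu0
  simpa [h] using hmvt

theorem mul_log_mul_one_add_sub_mul_log_mul_one_sub_le {m u : ℝ} (hm : 0 < m) (hu0 : 0 ≤ u)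
    (hu1 : u < 1) :
    m * (1 + u) * log (m * (1 + u)) - m * (1 - u) * log (m * (1 - u))
      ≤ 2 * m * u * (1 + log m) := by
  rw [log_mul hm.ne' (by linarith), log_mul hm.ne' (by linarith)]
  linear_combination m * one_add_mul_log_one_add_sub_one_sub_mul_log_one_sub_le hu0 hu1

theorem add_one_mul_log_add_one_sub_mul_log_le {a : ℝ} (ha : 0 < a) :
    (a + 1) * log (a + 1) - a * log a ≤ 1 + log (a + 1 / 2) := by
  have h2a : 2 * a + 1 ≠ 0 := by positivity
  have key := mul_log_mul_one_add_sub_mul_log_mul_one_sub_le (m := a + 1 / 2)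
    (u := 1 / (2 * a + 1)) (by positivity) (by positivity)
    (by rw [div_lt_one (by positivity)]; linarith)
  rwa [show (a + 1 / 2) * (1 + 1 / (2 * a + 1)) = a + 1 by field_simp; ring,
    show (a + 1 / 2) * (1 - 1 / (2 * a + 1)) = a by field_simp; ring,
    show 2 * (a + 1 / 2) * (1 / (2 * a + 1)) = 1 by field_simp, one_mul] at key

theorem half_shifted_stirling_le_log_factorial (n : ℕ) :
    (n + 1 / 2) * log (n + 1 / 2) - (n + 1 / 2) + (log 2 + 1) / 2 ≤ log n ! := by
  induction n with
  | zero =>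
    have : log (1 / 2 : ℝ) = -log 2 := by rw [one_div, log_inv]
    simp only [Nat.cast_zero, zero_add, Nat.factorial_zero, Nat.cast_one, log_one, this]
    linarith
  | succ n ih =>
    have hstep := add_one_mul_log_add_one_sub_mul_log_le (a := n + 1 / 2) (by positivity)
    rw [Nat.factorial_succ, Nat.cast_mul, log_mul (by positivity) (by positivity)]
    push_cast
    rw [show (n : ℝ) + 1 / 2 + 1 = n + 1 + 1 / 2 by ring,
      show (n : ℝ) + 1 / 2 + 1 / 2 = n + 1 by ring] at hstep
    linarith

theorem mul_log_sub_le_mul_log_sub {a x : ℝ} (ha : 0 < a) (hx : 0 < x) :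
    a * log x - x ≤ a * log a - a := by
  have := mul_le_mul_of_nonneg_left (log_le_sub_one_of_pos (div_pos hx ha)) ha.le
  rw [log_div hx.ne' ha.ne', mul_sub_one, mul_div_cancel₀ _ ha.ne'] at this
  linarith

theorem sqrt_mul_poisson_eq_exp {x : ℝ} (hx : 0 < x) (i : ℕ) :
    √x * (exp (-x) * x ^ i / i !) = exp ((i + 1 / 2) * log x - x - log i !) := by
  rw [exp_sub, exp_sub, add_mul, exp_add, ← log_pow, exp_log (by positivity),
    exp_log (by positivity), sqrt_eq_rpow, rpow_def_of_pos hx, exp_neg]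
  ring_nf

theorem one_div_sqrt_two_mul_exp_one_eq : 1 / √(2 * exp 1) = exp (-((log 2 + 1) / 2)) := by
  have : √(2 * exp 1) = exp ((log 2 + 1) / 2) := by
    rw [sqrt_eq_rpow, rpow_def_of_pos (by positivity), log_mul two_ne_zero (exp_pos 1).ne',
      log_exp]
    ring_nf
  rw [this, exp_neg, one_div]

theorem single_poisson_bound (x : ℝ) (hx : 0 ≤ x) (i : ℕ) :
    Real.sqrt x * (Real.exp (-x) * x ^ i / (Nat.factorial i : ℝ))
      ≤ 1 / Real.sqrt (2 * Real.exp 1) := by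
  rcases hx.eq_or_lt with rfl | hx
  · simp only [sqrt_zero, zero_mul]; positivity
  rw [sqrt_mul_poisson_eq_exp hx, one_div_sqrt_two_mul_exp_one_eq, exp_le_exp]
  have hi : (0 : ℝ) < i + 1 / 2 := by positivity
  linarith [mul_log_sub_le_mul_log_sub hi hx, half_shifted_stirling_le_log_factorial i]
end
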